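/- arXiv:2209.09045 — 5 statements merged into one kernel-verified Lean document; each statement's English description precedes it below -/
import Mathlib

section
/- For all complex numbers z ≠ 0, |1 - i·z| ≥ |cos(arg z)|. -/
/-! With `z = r e^{iθ}`, `‖1 - i z‖² = (1 + r sin θ)² + (r cos θ)² = (r + sin θ)² + cos² θ ≥ cos² θ`. -/

open Complex

theorem norm_one_sub_I_mul_sq (z : ℂ) :
    ‖1 - I * z‖ ^ 2 = (‖z‖ + Real.sin z.arg) ^ 2 + Real.cos z.arg ^ 2 := by
  have hre : z.re = ‖z‖ * Real.cos z.arg := (norm_mul_cos_arg z).symm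
  have him : z.im = ‖z‖ * Real.sin z.arg := (norm_mul_sin_arg z).symm
  have hsq : ‖1 - I * z‖ ^ 2 = (1 + z.im) ^ 2 + z.re ^ 2 := by
    rw [← normSq_eq_norm_sq, normSq_apply]
    simp only [sub_re, sub_im, one_re, one_im, mul_re, mul_im, I_re, I_im]
    ring
  rw [hsq, hre, him]
  linear_combination (‖z‖ ^ 2 - 1) * Real.sin_sq_add_cos_sq z.arg

theorem abs_one_sub_I_mul_ge_abs_cos_arg_general (z : ℂ) :
    |Real.cos z.arg| ≤ ‖1 - Complex.I * z‖ := by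
  have hsq : Real.cos z.arg ^ 2 ≤ ‖1 - I * z‖ ^ 2 := by
    rw [norm_one_sub_I_mul_sq]
    linarith [sq_nonneg (‖z‖ + Real.sin z.arg)]
  simpa only [abs_norm] using sq_le_sq.mp hsq

theorem abs_one_sub_I_mul_ge_abs_cos_arg (z : ℂ) (hz : z ≠ 0) :
    |Real.cos z.arg| ≤ ‖1 - Complex.I * z‖ :=
  abs_one_sub_I_mul_ge_abs_cos_arg_general z
end

section
/- For positive integers n ≥ 2 and a subset c ⊆ {1,...,n} with |c| = k, the coefficient of x^{2(n-1)} in the formal power series obtained by applying ∏_{i∈c} x_i ∂/∂x_i to ∏_{i=1}^n x_i/(1-x_i) and then setting all x_i = x equals binomial(2n+k-3, n-2). Equivalently, Σ over (d_1,...,d_n) with d_i ≥ 1 and Σd_i = 2(n-1) of ∏_{i∈c} d_i equals binomial(2n+k-3, n-2). -/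
open Finset

lemma idA (u m : ℕ) : ∑ b ∈ range (m + 1), (b + u - 1).choose b = (m + u).choose m := by
  induction m with
  | zero => simp
  | succ m ih =>
    rw [Finset.sum_range_succ, ih, show m + 1 + u - 1 = m + u by omega,
      show m + 1 + u = (m + u) + 1 by omega, Nat.choose_succ_succ]

lemma idB (u m : ℕ) :
    ∑ b ∈ range (m + 1), (m - b + 1) * (b + u - 1).choose b = (m + u + 1).choose m := by
  induction m with
  | zero => simp
  | succ m ih =>
    rw [Finset.sum_range_succ]
    have h1 : ∑ b ∈ range (m + 1), (m + 1 - b + 1) * (b + u - 1).choose b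
        = ∑ b ∈ range (m + 1), ((m - b + 1) * (b + u - 1).choose b + (b + u - 1).choose b) := by
      refine Finset.sum_congr rfl fun b hb => ?_
      have hb' : b ≤ m := by simpa [Nat.lt_succ_iff] using hb
      have : m + 1 - b + 1 = (m - b + 1) + 1 := by omega
      rw [this, add_mul, one_mul]
    rw [h1, Finset.sum_add_distrib, ih, idA u m,
      show m + 1 - (m + 1) + 1 = 1 by omega, one_mul,
      show m + 1 + u - 1 = m + u by omega]
    have pas1 : (m + u).choose m + (m + u).choose (m + 1) = (m + u + 1).choose (m + 1) :=
      (Nat.choose_succ_succ _ _).symm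
    have pas2 : (m + u + 1).choose m + (m + u + 1).choose (m + 1) = (m + u + 2).choose (m + 1) :=
      (Nat.choose_succ_succ _ _).symm
    rw [show m + 1 + u + 1 = m + u + 2 by omega]
    omega

lemma sum_prod_piAntidiag {ι : Type*} [DecidableEq ι] (s : Finset ι) :
    ∀ c ⊆ s, ∀ m, (∑ f ∈ Finset.piAntidiag s m, ∏ i ∈ c, (f i + 1))
      = (m + s.card + c.card - 1).choose m := by
  induction s using Finset.cons_induction with
  | empty =>
    intro c hc m
    rw [Finset.subset_empty.mp hc]
    rcases Nat.eq_zero_or_pos m with rfl | hm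
    · simp
    · rw [Finset.piAntidiag_empty_of_ne_zero (by omega), Finset.sum_empty, Finset.card_empty,
        Nat.choose_eq_zero_of_lt (by omega)]
  | cons i s hi ih =>
    intro c hc m
    rw [Finset.piAntidiag_cons, Finset.sum_disjiUnion]
    simp only [Finset.sum_map, Function.Embedding.coeFn_mk, addRightEmbedding_apply]
    rw [Finset.Nat.sum_antidiagonal_eq_sum_range_succ_mk]
    by_cases hic : i ∈ c
    · have hcs : c.erase i ⊆ s := fun j hj =>
        (Finset.mem_cons.mp (hc (Finset.erase_subset _ _ hj))).resolve_left
          (Finset.ne_of_mem_erase hj)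
      have hstep : ∀ a ∈ range (m + 1),
          (∑ g ∈ Finset.piAntidiag s (m - a), ∏ j ∈ c, ((g + fun t => if t = i then a else 0) j + 1))
            = (a + 1) * ((m - a) + s.card + (c.erase i).card - 1).choose (m - a) := by
        intro a _
        rw [← ih _ hcs (m - a), Finset.mul_sum]
        refine Finset.sum_congr rfl fun g hg => ?_
        have hgi : g i = 0 := by
          by_contra h
          exact hi ((Finset.mem_piAntidiag.mp hg).2 i h)
        rw [← Finset.mul_prod_erase c _ hic]
        have h1 : (g + fun t => if t = i then a else 0) i + 1 = a + 1 := by simp [hgi]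
        rw [h1]
        congr 1
        refine Finset.prod_congr rfl fun j hj => ?_
        simp [if_neg (Finset.ne_of_mem_erase hj)]
      rw [Finset.sum_congr rfl hstep]
      have hrefl := Finset.sum_range_reflect
        (fun b => (m - b + 1) * (b + s.card + (c.erase i).card - 1).choose b) (m + 1)
      have hmatch : ∀ a ∈ range (m + 1),
          (a + 1) * ((m - a) + s.card + (c.erase i).card - 1).choose (m - a)
          = (m - (m + 1 - 1 - a) + 1) *
            ((m + 1 - 1 - a) + s.card + (c.erase i).card - 1).choose (m + 1 - 1 - a) := by
        intro a ha
        have ha' : a ≤ m := by simpa [Nat.lt_succ_iff] using ha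
        have e1 : m + 1 - 1 - a = m - a := by omega
        have e2 : m - (m - a) = a := by omega
        rw [e1, e2]
      rw [Finset.sum_congr rfl hmatch, hrefl]
      simp only [add_assoc]
      rw [idB]
      have hck : c.card = (c.erase i).card + 1 := by
        rw [Finset.card_erase_of_mem hic]
        have : 1 ≤ c.card := Finset.card_pos.mpr ⟨i, hic⟩
        omega
      rw [Finset.card_cons]
      congr 1
      omega
    · have hcs : c ⊆ s := fun j hj =>
        (Finset.mem_cons.mp (hc hj)).resolve_left (fun h => hic (h ▸ hj))
      have hstep : ∀ a ∈ range (m + 1),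
          (∑ g ∈ Finset.piAntidiag s (m - a), ∏ j ∈ c, ((g + fun t => if t = i then a else 0) j + 1))
            = ((m - a) + s.card + c.card - 1).choose (m - a) := by
        intro a _
        rw [← ih _ hcs (m - a)]
        refine Finset.sum_congr rfl fun g hg => ?_
        refine Finset.prod_congr rfl fun j hj => ?_
        simp [if_neg (show j ≠ i from fun h => hic (h ▸ hj))]
      rw [Finset.sum_congr rfl hstep]
      have hrefl := Finset.sum_range_reflect
        (fun b => (b + s.card + c.card - 1).choose b) (m + 1)
      have hmatch : ∀ a ∈ range (m + 1),
          ((m - a) + s.card + c.card - 1).choose (m - a)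
          = ((m + 1 - 1 - a) + s.card + c.card - 1).choose (m + 1 - 1 - a) := by
        intro a ha
        rw [show m + 1 - 1 - a = m - a by omega]
      rw [Finset.sum_congr rfl hmatch, hrefl]
      simp only [add_assoc]
      rw [idA]
      rw [Finset.card_cons]
      congr 1
      omega

theorem degree_sequence_moment (n k : ℕ) (hn : 2 ≤ n) (c : Finset (Fin n))
    (hc : c.card = k) :
    ∑ᶠ d ∈ {d : Fin n → ℕ | (∀ i, 1 ≤ d i) ∧ ∑ i, d i = 2 * (n - 1)},
        ∏ i ∈ c, d i
      = (2 * n + k - 3).choose (n - 2) := by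
  classical
  set S : Finset (Fin n → ℕ) :=
    (Finset.piAntidiag Finset.univ (2 * (n - 1))).filter (fun d => ∀ i, 1 ≤ d i) with hS
  have hset : {d : Fin n → ℕ | (∀ i, 1 ≤ d i) ∧ ∑ i, d i = 2 * (n - 1)} = ↑S := by
    ext d
    simp [hS, Finset.mem_piAntidiag, and_comm]
  rw [hset, finsum_mem_coe_finset]
  have hbij : ∑ d ∈ S, ∏ i ∈ c, d i
      = ∑ e ∈ Finset.piAntidiag (Finset.univ : Finset (Fin n)) (n - 2),
          ∏ i ∈ c, (e i + 1) := by
    refine Finset.sum_nbij' (i := fun d => fun j => d j - 1) (j := fun e => fun j => e j + 1)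
      ?_ ?_ ?_ ?_ ?_
    · intro d hd
      simp only [hS, Finset.mem_filter, Finset.mem_piAntidiag] at hd
      obtain ⟨⟨hsum, -⟩, hpos⟩ := hd
      simp only [Finset.mem_piAntidiag]
      refine ⟨?_, fun i _ => Finset.mem_univ i⟩
      have hsum' : ∑ j, d j = 2 * (n - 1) := hsum
      have key : ∑ j, d j = (∑ j, (d j - 1)) + n := by
        have : ∀ j : Fin n, d j = (d j - 1) + 1 := fun j => by have := hpos j; omega
        calc ∑ j, d j = ∑ j : Fin n, ((d j - 1) + 1) := Finset.sum_congr rfl fun j _ => this j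
          _ = (∑ j, (d j - 1)) + ∑ _j : Fin n, 1 := Finset.sum_add_distrib
          _ = (∑ j, (d j - 1)) + n := by simp [Finset.card_univ]
      omega
    · intro e he
      simp only [Finset.mem_piAntidiag] at he
      obtain ⟨hsum, -⟩ := he
      simp only [hS, Finset.mem_filter, Finset.mem_piAntidiag]
      refine ⟨⟨?_, fun i _ => Finset.mem_univ i⟩, fun i => by omega⟩
      have hsum' : ∑ j, e j = n - 2 := hsum
      have : ∑ j : Fin n, (e j + 1) = (∑ j, e j) + n := by
        rw [Finset.sum_add_distrib]; simp [Finset.card_univ]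
      omega
    · intro d hd
      simp only [hS, Finset.mem_filter] at hd
      funext j
      have := hd.2 j
      show d j - 1 + 1 = d j
      omega
    · intro e _
      funext j
      show e j + 1 - 1 = e j
      omega
    · intro d hd
      simp only [hS, Finset.mem_filter] at hd
      refine Finset.prod_congr rfl fun i _ => ?_
      have := hd.2 i
      show d i = d i - 1 + 1
      omega
  rw [hbij, sum_prod_piAntidiag _ c (Finset.subset_univ c) (n - 2), Finset.card_univ,
    Fintype.card_fin, hc]
  have harg : n - 2 + n + k - 1 = 2 * n + k - 3 := by clear hbij hset hS; clear S; omega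
  rw [harg]
end

section
/- For integers n ≥ k ≥ 1 with n ≥ 2: (1/n!) · Σ over pairs (T, c) of a labelled tree T on n vertices and an injective tuple c of k distinct vertices, of ∏_{i=1}^n (d_i(T) + 1_{i∈c} - 1)!, equals binomial(2n-1, n-k) · binomial(2n+k-3, 2n-1) · (k-2)!, where for k=1 the expression (k-2)! is interpreted via the identity ((n-2)!/(n-k)!)·binomial(2n+k-3, n-2) with k=1. -/
/-!
Fix the tuple `c`, with image `S` of size `k`, and write the degree sequence of a tree on
`n = m + 2` vertices as `e + 1`, so that `∑ e = m`. The summand is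
`∏ (e i + [i ∈ S])! = ∏ (e i)! * ∏ (1 + [i ∈ S]).multichoose (e i)`. By the degree-refined
Cayley formula, proved by deleting a leaf, there are exactly `m! / ∏ (e i)!` trees with degrees
`e + 1`, so the sum over trees is `m! * ∑_{∑ e = m} ∏ (1 + [i ∈ S]).multichoose (e i)`.
This is `m!` times the coefficient of `X^m` in
`∏ (1 - X)^{-(1 + [i ∈ S])} = (1 - X)^{-(n + k)}`, i.e. `m! * (n + k).multichoose m = (n - 2)! * C(2n + k - 3, n - 2)`. Finally there are
`n! / (n - k)!` tuples `c`.
-/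

open Finset PowerSeries
open scoped Nat

lemma PowerSeries.coeff_invOneSubPow {S : Type*} [CommRing S] (d n : ℕ) :
    coeff n (invOneSubPow S d : S⟦X⟧) = d.multichoose n := by
  cases d with
  | zero => cases n <;> simp [invOneSubPow_zero, coeff_one]
  | succ d =>
    simp [invOneSubPow_val_succ_eq_mk_add_choose, Nat.multichoose_eq, Nat.choose_symm_add]

theorem Nat.sum_piAntidiag_prod_multichoose {ι : Type*} [DecidableEq ι] (s : Finset ι)
    (a : ι → ℕ) (m : ℕ) :
    ∑ e ∈ piAntidiag s m, ∏ i ∈ s, (a i).multichoose (e i) =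
      (∑ i ∈ s, a i).multichoose m := by
  have hprod : ∏ i ∈ s, invOneSubPow ℚ (a i) = invOneSubPow ℚ (∑ i ∈ s, a i) := by
    simp_rw [invOneSubPow_eq_inv_one_sub_pow, prod_pow_eq_pow_sum]
  have := congrArg (fun u : ℚ⟦X⟧ˣ => coeff m (u : ℚ⟦X⟧)) hprod
  simp only [Units.coe_prod, coeff_prod, coeff_invOneSubPow, finsuppAntidiag, sum_map] at this
  rw [← sum_attach]
  exact_mod_cast this

theorem Nat.factorial_add_eq_mul_multichoose (a b : ℕ) :
    (a + b)! = a ! * b ! * (b + 1).multichoose a := by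
  rw [Nat.multichoose_eq, show b + 1 + a - 1 = b + a by omega, add_comm a b,
    ← Nat.add_choose_mul_factorial_mul_factorial b a]
  ring

lemma prod_factorial_add_single {ι : Type*} [Fintype ι] [DecidableEq ι] (f : ι → ℕ)
    (j : ι) :
    ∏ i, ((f + Pi.single j 1 : ι → ℕ) i)! = (f j + 1) * ∏ i, (f i)! := by
  rw [Fintype.prod_eq_mul_prod_compl j, Fintype.prod_eq_mul_prod_compl j (fun i => (f i)!),
    prod_congr rfl fun i hi => by
      rw [Pi.add_apply, Pi.single_eq_of_ne (by simpa using hi), add_zero]]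
  simp [Nat.factorial_succ, mul_assoc]

namespace SimpleGraph

variable {V : Type*} {v : V}

lemma ncard_neighborSet_eq_degree (G : SimpleGraph V) (x : V) [Fintype (G.neighborSet x)] :
    (G.neighborSet x).ncard = G.degree x := by
  rw [← Nat.card_coe_set_eq, Nat.card_eq_fintype_card, card_neighborSet_eq_degree]

lemma Preconnected.ncard_neighborSet_pos [Finite V] [Nontrivial V] {G : SimpleGraph V}
    (hG : G.Preconnected) (x : V) : 0 < (G.neighborSet x).ncard := by
  classical
  have := Fintype.ofFinite V
  rw [ncard_neighborSet_eq_degree]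
  exact hG.degree_pos_of_nontrivial x

lemma IsTree.sum_ncard_neighborSet [Fintype V] {T : SimpleGraph V} (hT : T.IsTree) :
    ∑ x, (T.neighborSet x).ncard = 2 * (Fintype.card V - 1) := by
  classical
  simp_rw [ncard_neighborSet_eq_degree, sum_degrees_eq_twice_card_edges, ← hT.card_edgeFinset]
  rfl

def attachLeaf (G : SimpleGraph ({v}ᶜ : Set V)) (j : ({v}ᶜ : Set V)) : SimpleGraph V :=
  G.map (Function.Embedding.subtype _) ⊔ edge v j

section attachLeaf

variable {G : SimpleGraph ({v}ᶜ : Set V)} {j : ({v}ᶜ : Set V)}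

lemma neighborSet_attachLeaf_self : (attachLeaf G j).neighborSet v = {(j : V)} := by
  obtain ⟨j, hj⟩ := j
  simp only [Set.mem_compl_iff, Set.mem_singleton_iff] at hj
  ext x
  simp [attachLeaf, edge_adj, map_adj']
  grind

lemma induce_attachLeaf : (attachLeaf G j).induce {v}ᶜ = G := by
  ext ⟨a, ha⟩ ⟨b, hb⟩
  simp only [Set.mem_compl_iff, Set.mem_singleton_iff] at ha hb
  simp [attachLeaf, edge_adj, map_adj', ha, hb]
  grind [Adj.ne]

lemma attachLeaf_induce_compl {T : SimpleGraph V} (h : T.neighborSet v = {(j : V)}) :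
    attachLeaf (T.induce {v}ᶜ) j = T := by
  have hadj : ∀ x, T.Adj v x ↔ x = j := fun x => Set.ext_iff.1 h x
  obtain ⟨j, hj⟩ := j
  simp only [Set.mem_compl_iff, Set.mem_singleton_iff] at hj
  ext x y
  simp [attachLeaf, edge_adj, map_adj']
  grind [T.adj_comm, Adj.ne]

lemma connected_attachLeaf (hG : G.Connected) : (attachLeaf G j).Connected := by
  have hreach : ∀ x : V, (attachLeaf G j).Reachable x v := by
    intro x
    by_cases hx : x = v
    · rw [hx]
    have : (attachLeaf G j).Reachable x j := ((hG.preconnected ⟨x, hx⟩ j).map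
      (Embedding.map (Function.Embedding.subtype _) G).toHom).mono le_sup_left
    have hj : (attachLeaf G j).Adj v j := by
      rw [← mem_neighborSet, neighborSet_attachLeaf_self, Set.mem_singleton_iff]
    exact this.trans hj.symm.reachable
  exact (connected_iff_exists_forall_reachable _).2 ⟨v, fun x => (hreach x).symm⟩

lemma ncard_edgeSet_attachLeaf [Finite V] :
    (attachLeaf G j).edgeSet.ncard = G.edgeSet.ncard + 1 := by
  have hne : v ≠ j := fun h => j.2 h.symm
  rw [attachLeaf, edgeSet_sup, edgeSet_map, edgeSet_edge_of_ne hne, Set.ncard_union_eq,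
    Set.ncard_image_of_injective _ (Function.Embedding.subtype _).sym2Map.injective,
    Set.ncard_singleton]
  rw [Set.disjoint_singleton_right]
  rintro ⟨⟨x, y⟩, -, he⟩
  simp only [Function.Embedding.sym2Map_apply, Sym2.map_mk, Function.Embedding.coe_subtype,
    Sym2.eq_iff] at he
  rcases he with ⟨h, -⟩ | ⟨-, h⟩
  · exact x.2 h
  · exact y.2 h

lemma isTree_attachLeaf [Finite V] (hG : G.IsTree) : (attachLeaf G j).IsTree := by
  rw [isTree_iff_connected_and_card] at hG ⊢
  refine ⟨connected_attachLeaf hG.1, ?_⟩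
  rw [Nat.card_coe_set_eq, ncard_edgeSet_attachLeaf, ← Nat.card_coe_set_eq, hG.2,
    Nat.card_coe_set_eq, Set.ncard_compl, Set.ncard_singleton]
  have : 0 < Nat.card V := Nat.card_pos_iff.2 ⟨⟨v⟩, inferInstance⟩
  omega

end attachLeaf

lemma IsTree.induce_compl_singleton [Finite V] {T : SimpleGraph V} (hT : T.IsTree)
    (hv : (T.neighborSet v).ncard = 1) : (T.induce {v}ᶜ).IsTree := by
  classical
  have := Fintype.ofFinite V
  exact ⟨hT.connected.induce_compl_singleton_of_degree_eq_one
    (by rwa [← ncard_neighborSet_eq_degree]), hT.isAcyclic.induce _⟩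

lemma ncard_neighborSet_eq_induce_compl_add [Finite V] [DecidableEq V] {T : SimpleGraph V}
    {j : ({v}ᶜ : Set V)} (h : T.neighborSet v = {(j : V)}) (i : ({v}ᶜ : Set V)) :
    (T.neighborSet i).ncard =
      ((T.induce {v}ᶜ).neighborSet i).ncard + (Pi.single j 1 : _ → ℕ) i := by
  have : T.neighborSet i =
      Subtype.val '' ((T.induce {v}ᶜ).neighborSet i) ∪ {x | x = v ∧ i = j} := by
    ext x
    by_cases hx : x = v
    · subst hx
      rw [mem_neighborSet, T.adj_comm, ← mem_neighborSet, h]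
      simpa using Subtype.coe_inj
    · simp [hx]
  rw [this, Set.ncard_union_eq, Set.ncard_image_of_injective _ Subtype.val_injective]
  · by_cases hij : i = j <;> simp [hij]
  · rw [Set.disjoint_right]
    rintro x ⟨rfl, -⟩ ⟨y, -, hy⟩
    exact y.2 hy

def treesWithDegrees (d : V → ℕ) : Set (SimpleGraph V) :=
  {T | T.IsTree ∧ ∀ x, (T.neighborSet x).ncard = d x}

lemma card_treesWithDegrees_eq_sum_of_eq_one [Fintype V] [DecidableEq V] {d : V → ℕ}
    (hv : d v = 1) (hd : ∀ x, 0 < d x) :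
    Nat.card (treesWithDegrees d) =
      ∑ j : ({v}ᶜ : Set V),
        Nat.card (treesWithDegrees (d ∘ Subtype.val - Pi.single j 1)) := by
  rw [← Nat.card_sigma]
  have hmem : ∀ p : Σ j : ({v}ᶜ : Set V), treesWithDegrees (d ∘ Subtype.val - Pi.single j 1),
      attachLeaf p.2.1 p.1 ∈ treesWithDegrees d := by
    rintro ⟨j, G, hG, hdeg⟩
    refine ⟨isTree_attachLeaf hG, fun x => ?_⟩
    by_cases hx : x = v
    · rw [hx, neighborSet_attachLeaf_self, Set.ncard_singleton, hv]
    · have := ncard_neighborSet_eq_induce_compl_add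
        (neighborSet_attachLeaf_self (G := G) (j := j)) ⟨x, hx⟩
      rw [induce_attachLeaf, hdeg] at this
      have := hd x
      simp only [Pi.sub_apply, Function.comp_apply, Pi.single_apply] at *
      split_ifs at * <;> omega
  symm
  refine Nat.card_eq_of_bijective (fun p => ⟨_, hmem p⟩) ⟨?_, ?_⟩
  · rintro ⟨j, G, hG⟩ ⟨j', G', hG'⟩ h
    simp only [Subtype.mk.injEq] at h
    obtain rfl : j = j' := by
      have := congrArg (·.neighborSet v) h
      exact Subtype.ext (by simpa [neighborSet_attachLeaf_self] using this)
    obtain rfl : G = G' := by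
      simpa [induce_attachLeaf] using congrArg (·.induce {v}ᶜ) h
    rfl
  · rintro ⟨T, hT, hdeg⟩
    obtain ⟨w, hw⟩ := Set.ncard_eq_one.1 ((hdeg v).trans hv)
    have hwv : w ≠ v := fun h => T.irrefl (v := v) (by rw [← mem_neighborSet, hw, h]; rfl)
    refine ⟨⟨⟨w, hwv⟩, T.induce {v}ᶜ,
      hT.induce_compl_singleton (by rw [hw, Set.ncard_singleton]), fun i => ?_⟩, ?_⟩
    · have := ncard_neighborSet_eq_induce_compl_add (j := ⟨w, hwv⟩) hw i
      rw [hdeg] at this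
      simp only [Pi.sub_apply, Function.comp_apply]
      omega
    · exact Subtype.ext (attachLeaf_induce_compl hw)

lemma treesWithDegrees_one_of_card_eq_two [Fintype V] (hV : Fintype.card V = 2) :
    treesWithDegrees (1 : V → ℕ) = {⊤} := by
  have hcompl (x : V) : ({x}ᶜ : Set V).ncard = 1 := by
    rw [Set.ncard_compl, Set.ncard_singleton, Nat.card_eq_fintype_card, hV]
  have : Nonempty V := Fintype.card_pos_iff.1 (by omega)
  ext T
  refine ⟨fun ⟨_, hdeg⟩ => ?_, ?_⟩
  · have hnbr (x : V) : T.neighborSet x = {x}ᶜ :=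
      Set.eq_of_subset_of_ncard_le (fun y hy => (T.ne_of_adj hy).symm)
        (by rw [hcompl, hdeg]; rfl)
    ext x y
    rw [← mem_neighborSet, hnbr, top_adj]
    exact ne_comm
  · rintro rfl
    refine ⟨⟨connected_top, IsAcyclic.of_card_le_two ?_⟩, fun x => ?_⟩
    · simp [ENat.card_eq_coe_fintype_card, hV]
    · rw [neighborSet_top, hcompl]; rfl

lemma prod_factorial_mul_card_treesWithDegrees_sub_single [Fintype V] [DecidableEq V]
    (hV : 2 ≤ Fintype.card V) {m : ℕ}
    (ih : ∀ f : V → ℕ, ∑ x, f x = m →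
      (∏ x, (f x)!) * Nat.card (treesWithDegrees (f + 1)) = m !)
    (e : V → ℕ) (he : ∑ x, e x = m + 1) (j : V) :
    (∏ x, (e x)!) * Nat.card (treesWithDegrees (e + 1 - Pi.single j 1)) = e j * m ! := by
  rcases Nat.eq_zero_or_pos (e j) with h0 | hpos
  · have : Nontrivial V := Fintype.one_lt_card_iff_nontrivial.1 hV
    have hempty : treesWithDegrees (e + 1 - Pi.single j 1) = ∅ :=
      Set.eq_empty_of_forall_notMem fun T ⟨hT, hdeg⟩ => by
        have := hT.connected.preconnected.ncard_neighborSet_pos j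
        simp [hdeg, h0] at this
    simp [hempty, h0]
  · obtain ⟨f, rfl⟩ : ∃ f, e = f + Pi.single j 1 :=
      ⟨e - Pi.single j 1, funext fun i => by
        by_cases h : i = j <;> simp [h]; omega⟩
    rw [add_right_comm, add_tsub_cancel_right, prod_factorial_add_single, mul_assoc,
      ih f (by simpa [sum_add_distrib] using he)]
    simp

theorem prod_factorial_mul_card_treesWithDegrees (m : ℕ) {V : Type*} [Fintype V]
    (hV : Fintype.card V = m + 2) (e : V → ℕ) (he : ∑ x, e x = m) :
    (∏ x, (e x)!) * Nat.card (treesWithDegrees (e + 1)) = m ! := by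
  classical
  induction m generalizing V with
  | zero =>
    obtain rfl : e = 0 := funext fun x => by simpa using (sum_eq_zero_iff.1 he) x (mem_univ x)
    simp [treesWithDegrees_one_of_card_eq_two hV]
  | succ m ih =>
    obtain ⟨v, hv⟩ : ∃ v, e v = 0 := by
      by_contra! h
      have := sum_le_sum fun x (_ : x ∈ univ) => Nat.one_le_iff_ne_zero.2 (h x)
      simp [he, hV] at this
    have hW : Fintype.card ({v}ᶜ : Set V) = m + 2 := by
      rw [← Nat.card_eq_fintype_card, Nat.card_coe_set_eq, Set.ncard_compl, Set.ncard_singleton,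
        Nat.card_eq_fintype_card, hV]
      rfl
    have hsum : ∑ j : ({v}ᶜ : Set V), e j = m + 1 := by
      rw [← he, Fintype.sum_eq_add_sum_subtype_ne _ v, hv, zero_add]
      rfl
    have hprod : ∏ x, (e x)! = ∏ j : ({v}ᶜ : Set V), (e j)! := by
      rw [Fintype.prod_eq_mul_prod_subtype_ne _ v, hv, Nat.factorial_zero, one_mul]
      rfl
    rw [card_treesWithDegrees_eq_sum_of_eq_one (d := e + 1) (v := v) (by simp [hv])
      (fun x => Nat.succ_pos (e x)), hprod, mul_sum]
    have hstep (j : ({v}ᶜ : Set V)) :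
        (∏ i : ({v}ᶜ : Set V), (e i)!) *
          Nat.card (treesWithDegrees ((e + 1) ∘ Subtype.val - Pi.single j 1)) = e j * m ! :=
      prod_factorial_mul_card_treesWithDegrees_sub_single (by omega) (ih hW) (e ∘ Subtype.val)
        hsum j
    rw [sum_congr rfl fun j _ => hstep j, ← sum_mul, hsum, Nat.factorial_succ]

lemma IsTree.sum_ncard_neighborSet_sub_one [Fintype V] {m : ℕ} (hV : Fintype.card V = m + 2)
    {T : SimpleGraph V} (hT : T.IsTree) : ∑ x, ((T.neighborSet x).ncard - 1) = m := by
  have : Nontrivial V := Fintype.one_lt_card_iff_nontrivial.1 (by omega)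
  rw [sum_tsub_distrib _ fun x _ => hT.connected.preconnected.ncard_neighborSet_pos x,
    hT.sum_ncard_neighborSet, hV]
  simp
  omega

theorem sum_isTree_eq_sum_piAntidiag {M : Type*} [AddCommMonoid M] [Fintype V] [DecidableEq V]
    [Fintype {T : SimpleGraph V // T.IsTree}] {m : ℕ} (hV : Fintype.card V = m + 2)
    (g : (V → ℕ) → M) :
    ∑ T : {T : SimpleGraph V // T.IsTree}, g (fun x => (T.1.neighborSet x).ncard - 1) =
      ∑ e ∈ piAntidiag univ m, Nat.card (treesWithDegrees (e + 1)) • g e := by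
  have : Nontrivial V := Fintype.one_lt_card_iff_nontrivial.1 (by omega)
  rw [← sum_fiberwise_of_maps_to (g := fun T : {T : SimpleGraph V // T.IsTree} =>
    fun x => (T.1.neighborSet x).ncard - 1) (t := piAntidiag univ m)
    (fun T _ => by simpa using T.2.sum_ncard_neighborSet_sub_one hV)]
  refine sum_congr rfl fun e _ => ?_
  rw [sum_congr rfl fun T hT => by rw [(mem_filter.1 hT).2], sum_const]
  congr 1
  rw [← Fintype.card_subtype, ← Nat.card_eq_fintype_card]
  refine Nat.card_congr ((Equiv.subtypeSubtypeEquivSubtypeInter (fun T : SimpleGraph V => T.IsTree)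
    (fun T => (fun x => (T.neighborSet x).ncard - 1) = e)).trans
    (Equiv.subtypeEquivRight fun T => and_congr_right fun hT => ?_))
  simp only [funext_iff, Pi.add_apply, Pi.one_apply]
  exact forall_congr' fun x => by
    have := hT.connected.preconnected.ncard_neighborSet_pos x
    omega

theorem sum_isTree_prod_factorial [Fintype V] [DecidableEq V]
    [Fintype {T : SimpleGraph V // T.IsTree}] {m : ℕ} (hV : Fintype.card V = m + 2)
    (r : V → ℕ) :
    ∑ T : {T : SimpleGraph V // T.IsTree}, ∏ x, ((T.1.neighborSet x).ncard + r x - 1)! =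
      m ! * (∏ x, (r x)!) * (Fintype.card V + ∑ x, r x).multichoose m := by
  have : Nontrivial V := Fintype.one_lt_card_iff_nontrivial.1 (by omega)
  calc ∑ T : {T : SimpleGraph V // T.IsTree}, ∏ x, ((T.1.neighborSet x).ncard + r x - 1)!
      = ∑ T : {T : SimpleGraph V // T.IsTree},
          ∏ x, (((T.1.neighborSet x).ncard - 1) + r x)! := by
        refine sum_congr rfl fun T _ => prod_congr rfl fun x _ => ?_
        have := T.2.connected.preconnected.ncard_neighborSet_pos x
        rw [Nat.sub_add_comm this]
    _ = ∑ e ∈ piAntidiag univ m, Nat.card (treesWithDegrees (e + 1)) • ∏ x, (e x + r x)! :=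
        sum_isTree_eq_sum_piAntidiag hV fun e => ∏ x, (e x + r x)!
    _ = ∑ e ∈ piAntidiag univ m,
          m ! * (∏ x, (r x)!) * ∏ x, (r x + 1).multichoose (e x) := by
        refine sum_congr rfl fun e he => ?_
        simp_rw [Nat.factorial_add_eq_mul_multichoose, prod_mul_distrib, smul_eq_mul]
        rw [← prod_factorial_mul_card_treesWithDegrees m hV e (by simpa using he)]
        ring
    _ = m ! * (∏ x, (r x)!) * (Fintype.card V + ∑ x, r x).multichoose m := by
        rw [← mul_sum, Nat.sum_piAntidiag_prod_multichoose, sum_add_distrib, sum_const, card_univ,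
          smul_eq_mul, mul_one, add_comm]

end SimpleGraph

open scoped Classical

theorem ciliated_tree_count_general (n k : ℕ) (hkn : k ≤ n) (hn : 2 ≤ n) :
    (1 / (n.factorial : ℚ)) *
        ∑ T : {G : SimpleGraph (Fin n) // G.IsTree},
          ∑ c : Fin k ↪ Fin n,
            ∏ i : Fin n,
              (((T.1.neighborSet i).ncard +
                  (if ∃ j, c j = i then 1 else 0) - 1).factorial : ℚ)
      = ((n - 2).factorial : ℚ) / ((n - k).factorial : ℚ) *
          ((2 * n + k - 3).choose (n - 2) : ℚ) := by
  obtain ⟨m, rfl⟩ : ∃ m, n = m + 2 := ⟨n - 2, by omega⟩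
  have hfixed (c : Fin k ↪ Fin (m + 2)) :
      ∑ T : {G : SimpleGraph (Fin (m + 2)) // G.IsTree}, ∏ i,
        (((T.1.neighborSet i).ncard + (if ∃ j, c j = i then 1 else 0) - 1)! : ℚ) =
        (m ! * (2 * (m + 2) + k - 3).choose m : ℕ) := by
    have hsum : ∑ i, (if ∃ j, c j = i then 1 else 0) = k := by
      have himage : ({i | ∃ j, c j = i} : Finset (Fin (m + 2))) = univ.map c := by
        ext; simp
      rw [sum_boole, himage, card_map, card_fin, Nat.cast_id]
    have hprod : ∏ i, (if ∃ j, c j = i then 1 else 0)! = 1 :=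
      prod_eq_one fun i _ => by split_ifs <;> rfl
    have := SimpleGraph.sum_isTree_prod_factorial (Fintype.card_fin (m + 2))
      fun i => if ∃ j, c j = i then 1 else 0
    rw [hsum, hprod, mul_one, Fintype.card_fin, Nat.multichoose_eq] at this
    rw [show 2 * (m + 2) + k - 3 = m + 2 + k + m - 1 by omega]
    exact_mod_cast this
  rw [sum_comm, sum_congr rfl fun c _ => hfixed c, sum_const, card_univ,
    Fintype.card_embedding_eq, Fintype.card_fin, Fintype.card_fin, nsmul_eq_mul,
    Nat.add_sub_cancel, ← Nat.factorial_mul_descFactorial hkn]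
  have : ((m + 2).descFactorial k : ℚ) ≠ 0 := by
    exact_mod_cast (Nat.descFactorial_pos.2 hkn).ne'
  push_cast
  field_simp

theorem ciliated_tree_count (n k : ℕ) (hk : 1 ≤ k) (hkn : k ≤ n) (hn : 2 ≤ n) :
    (1 / (n.factorial : ℚ)) *
        ∑ T : {G : SimpleGraph (Fin n) // G.IsTree},
          ∑ c : Fin k ↪ Fin n,
            ∏ i : Fin n,
              (((T.1.neighborSet i).ncard +
                  (if ∃ j, c j = i then 1 else 0) - 1).factorial : ℚ)
      = ((n - 2).factorial : ℚ) / ((n - k).factorial : ℚ) *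
          ((2 * n + k - 3).choose (n - 2) : ℚ) :=
  ciliated_tree_count_general n k hkn hn
end

section
/- For every real number γ ∈ [0,1) and integers k ≥ 1, q ≥ 1 such that (2q+k-1)/(2n-1) ≤ 4q for all n ≥ k, the series f(γ) = Σ_{n ≥ k} binomial(2n+2q+k-3, 2n-1)·γ^{n-1} converges and satisfies f(γ) ≤ 4q / (1-√γ)^{2q+k}. -/
theorem tail_series_bound (γ : ℝ) (hγ0 : 0 ≤ γ) (hγ1 : γ < 1) (k q : ℕ)
    (hk : 1 ≤ k) (hq : 1 ≤ q)
    (hlarge : ∀ n : ℕ, k ≤ n → 2 * q + k - 1 ≤ 4 * q * (2 * n - 1)) :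
    Summable (fun n : ℕ =>
      if k ≤ n then ((2 * n + 2 * q + k - 3).choose (2 * n - 1) : ℝ) * γ ^ (n - 1)
      else 0) ∧
    (∑' n : ℕ,
        if k ≤ n then ((2 * n + 2 * q + k - 3).choose (2 * n - 1) : ℝ) * γ ^ (n - 1)
        else 0)
      ≤ 4 * q / (1 - Real.sqrt γ) ^ (2 * q + k) := by
  set δ := Real.sqrt γ with hδdef
  have hδ0 : 0 ≤ δ := Real.sqrt_nonneg _
  have hδ1 : δ < 1 := by
    have := Real.sqrt_lt_sqrt hγ0 hγ1
    simpa using this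
  have hδn : ‖δ‖ < 1 := by rwa [Real.norm_of_nonneg hδ0]
  have hδsq : δ ^ 2 = γ := Real.sq_sqrt hγ0
  set j := 2 * q + k - 1 with hjdef
  -- the majorant series
  have key : HasSum (fun m : ℕ => ((m + j).choose j : ℝ) * δ ^ m)
      (1 / (1 - δ) ^ (j + 1)) := hasSum_choose_mul_geometric_of_norm_lt_one j hδn
  have hg : Summable (fun m : ℕ => ((m + j).choose j : ℝ) * δ ^ m) := key.summable
  have hgnn : ∀ m : ℕ, 0 ≤ ((m + j).choose j : ℝ) * δ ^ m := fun m => by positivity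
  set F : ℕ → ℝ := fun n =>
    if k ≤ n then ((2 * n + 2 * q + k - 3).choose (2 * n - 1) : ℝ) * γ ^ (n - 1)
    else 0 with hFdef
  -- pointwise bound for n ≥ k  (writing n = m+1)
  have hbound : ∀ m : ℕ, F (m + 1) ≤ 4 * q * (((2 * m + j).choose j : ℝ) * δ ^ (2 * m)) := by
    intro m
    by_cases hm : k ≤ m + 1
    · have hn1 : 1 ≤ m + 1 := Nat.le_add_left _ _
      set n := m + 1 with hn
      have hNat : (2 * n + 2 * q + k - 3).choose (2 * n - 1) * (2 * n - 1)
          = (2 * m + j).choose (2 * m) * j := by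
        have h1 : 2 * n + 2 * q + k - 3 = 2 * m + j := by omega
        have h2 : 2 * n - 1 = 2 * m + 1 := by omega
        rw [h1, h2, Nat.choose_succ_right_eq]
        congr 1 <;> omega
      have hle : (2 * n + 2 * q + k - 3).choose (2 * n - 1) * (2 * n - 1)
          ≤ (4 * q * (2 * m + j).choose (2 * m)) * (2 * n - 1) := by
        rw [hNat]
        calc (2 * m + j).choose (2 * m) * j
            ≤ (2 * m + j).choose (2 * m) * (4 * q * (2 * n - 1)) :=
              Nat.mul_le_mul_left _ (hlarge n hm)
          _ = (4 * q * (2 * m + j).choose (2 * m)) * (2 * n - 1) := by ring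
      have hpos : 0 < 2 * n - 1 := by omega
      have hchoose : (2 * n + 2 * q + k - 3).choose (2 * n - 1)
          ≤ 4 * q * (2 * m + j).choose (2 * m) := Nat.le_of_mul_le_mul_right hle hpos
      have hsymm : (2 * m + j).choose (2 * m) = (2 * m + j).choose j := Nat.choose_symm_add
      rw [hsymm] at hchoose
      have hγpow : γ ^ (n - 1) = δ ^ (2 * m) := by
        have h2m : 2 * (n - 1) = 2 * m := by omega
        rw [← hδsq, ← pow_mul, h2m]
      have hδpnn : (0:ℝ) ≤ δ ^ (2 * m) := by positivity
      have : F n = ((2 * n + 2 * q + k - 3).choose (2 * n - 1) : ℝ) * δ ^ (2 * m) := by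
        rw [hFdef]
        simp only [if_pos hm, hγpow]
      rw [this]
      have hcast : ((2 * n + 2 * q + k - 3).choose (2 * n - 1) : ℝ)
          ≤ 4 * q * ((2 * m + j).choose j : ℝ) := by
        exact_mod_cast Nat.cast_le.mpr hchoose
      calc ((2 * n + 2 * q + k - 3).choose (2 * n - 1) : ℝ) * δ ^ (2 * m)
          ≤ (4 * q * ((2 * m + j).choose j : ℝ)) * δ ^ (2 * m) :=
            mul_le_mul_of_nonneg_right hcast hδpnn
        _ = 4 * q * (((2 * m + j).choose j : ℝ) * δ ^ (2 * m)) := by ring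
    · have : F (m + 1) = 0 := by rw [hFdef]; simp [hm]
      rw [this]
      positivity
  have hFnn : ∀ n, 0 ≤ F n := by
    intro n
    rw [hFdef]
    dsimp only
    split
    · positivity
    · exact le_rfl
  -- summability of the comparison sequence
  have hcomp : Summable (fun m : ℕ => 4 * (q:ℝ) * (((2 * m + j).choose j : ℝ) * δ ^ (2 * m))) := by
    have hinj : Function.Injective (fun m : ℕ => 2 * m) := fun a b h => by dsimp at h; omega
    have := (hg.comp_injective hinj).mul_left (4 * (q:ℝ))
    simpa [Function.comp] using this
  have hFsum : Summable F := by
    rw [← summable_nat_add_iff 1]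
    exact Summable.of_nonneg_of_le (fun m => hFnn (m + 1)) hbound hcomp
  refine ⟨hFsum, ?_⟩
  -- now the tsum bound
  have hF0 : F 0 = 0 := by
    rw [hFdef]
    simp only
    rw [if_neg (by omega)]
  have htail : ∑' n, F n = ∑' m, F (m + 1) := by
    rw [Summable.tsum_eq_zero_add hFsum, hF0, zero_add]
  have hgmul : Summable (fun m : ℕ => 4 * (q:ℝ) * (((m + j).choose j : ℝ) * δ ^ m)) :=
    hg.mul_left _
  have hle2 : ∑' m, F (m + 1)
      ≤ ∑' m, 4 * (q:ℝ) * (((m + j).choose j : ℝ) * δ ^ m) := by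
    apply Summable.tsum_le_tsum_of_inj (fun m : ℕ => 2 * m) (fun a b h => by dsimp at h; omega)
    · intro c _
      positivity
    · exact hbound
    · rw [← summable_nat_add_iff 1] at hFsum; exact hFsum
    · exact hgmul
  have htsum : ∑' m, 4 * (q:ℝ) * (((m + j).choose j : ℝ) * δ ^ m)
      = 4 * q * (1 / (1 - δ) ^ (j + 1)) := by
    rw [tsum_mul_left, key.tsum_eq]
  have hj1 : j + 1 = 2 * q + k := by omega
  rw [htail]
  calc ∑' m, F (m + 1) ≤ ∑' m, 4 * (q:ℝ) * (((m + j).choose j : ℝ) * δ ^ m) := hle2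
    _ = 4 * q * (1 / (1 - δ) ^ (j + 1)) := htsum
    _ = 4 * q / (1 - δ) ^ (2 * q + k) := by rw [hj1]; ring
end

section
/- For every positive integer n, complex number z with Re z > 0, real symmetric positive definite n×n matrix C, and bounded continuous function F: ℝⁿ → ℂ, the complex Gaussian integral satisfies |∫_{ℝⁿ} (2π)^{-n/2} (det(zC))^{-1/2} exp(-½⟨X, (zC)^{-1}X⟩) F(X) dX| ≤ (cos(arg z))^{-n/2} · sup_{X∈ℝⁿ} |F(X)|, where arg z ∈ (-π/2, π/2) and the principal branch of the square root of det(zC) is used. -/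
/-! The modulus of the complex Gaussian density of covariance `zC` is, up to the factor
`cos (arg z) ^ (-n/2)`, the real Gaussian density of covariance `(‖z‖² / Re z) C`:
`‖det (zC) ^ (-1/2)‖ = ‖z‖ ^ (-n/2) det C ^ (-1/2)` and
`‖exp (-½ ⟪X, (zC)⁻¹ X⟫)‖ = exp (-½ Re z⁻¹ ⟪X, C⁻¹ X⟫)` with `Re z⁻¹ = cos (arg z) / ‖z‖`.
So its `L¹` norm is `cos (arg z) ^ (-n/2)`, and `‖F‖ ≤ sup ‖F‖` gives the bound. The real
Gaussian integral `∫ exp (-½ ⟪X, A X⟫) = (2π) ^ (n/2) / √(det A)` follows from the standard one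
by writing `A = BᵀB` and substituting `Y = BX`. -/

open MeasureTheory Matrix

section RealGaussian

variable {ι : Type*} [Fintype ι]

theorem integrable_exp_neg_half_sum_sq :
    Integrable (fun Y : ι → ℝ => Real.exp (-(1 / 2) * ∑ i, Y i ^ 2)) := by
  simp_rw [Finset.mul_sum, Real.exp_sum]
  exact Integrable.fintype_prod (f := fun _ y => Real.exp (-(1 / 2) * y ^ 2))
    fun _ => integrable_exp_neg_mul_sq (by norm_num)

theorem integral_exp_neg_half_sum_sq :
    ∫ Y : ι → ℝ, Real.exp (-(1 / 2) * ∑ i, Y i ^ 2) = √(2 * Real.pi) ^ Fintype.card ι := by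
  simp_rw [Finset.mul_sum, Real.exp_sum]
  rw [integral_fintype_prod_volume_eq_pow (fun y : ℝ => Real.exp (-(1 / 2) * y ^ 2)),
    integral_gaussian]
  norm_num [div_div_eq_mul_div, mul_comm]

theorem dotProduct_transpose_mul_mulVec (B : Matrix ι ι ℝ) (X : ι → ℝ) :
    X ⬝ᵥ (Bᵀ * B) *ᵥ X = ∑ i, (B *ᵥ X) i ^ 2 := by
  rw [← mulVec_mulVec, dotProduct_mulVec, vecMul_transpose]
  simp only [dotProduct, sq]

variable [DecidableEq ι]

theorem measurableEmbedding_mulVec {B : Matrix ι ι ℝ} (hB : B.det ≠ 0) :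
    MeasurableEmbedding (B *ᵥ ·) := by
  let := B.invertibleOfIsUnitDet (isUnit_iff_ne_zero.mpr hB)
  exact (toLinearEquiv' B this).toContinuousLinearEquiv.toHomeomorph.measurableEmbedding

theorem map_mulVec_volume {B : Matrix ι ι ℝ} (hB : B.det ≠ 0) :
    Measure.map (B *ᵥ ·) volume = ENNReal.ofReal |B.det⁻¹| • volume :=
  Real.map_matrix_volume_pi_eq_smul_volume_pi hB

theorem integrable_comp_mulVec_iff {E : Type*} [NormedAddCommGroup E] {B : Matrix ι ι ℝ}
    (hB : B.det ≠ 0) {g : (ι → ℝ) → E} :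
    Integrable (fun X => g (B *ᵥ X)) ↔ Integrable g := by
  rw [← Function.comp_def, ← (measurableEmbedding_mulVec hB).integrable_map_iff]
  rw [map_mulVec_volume hB]
  exact integrable_smul_measure (by simpa using hB) ENNReal.ofReal_ne_top

theorem integral_comp_mulVec {E : Type*} [NormedAddCommGroup E] [NormedSpace ℝ E]
    {B : Matrix ι ι ℝ} (hB : B.det ≠ 0) (g : (ι → ℝ) → E) :
    ∫ X, g (B *ᵥ X) = |B.det|⁻¹ • ∫ Y, g Y := by
  rw [← (measurableEmbedding_mulVec hB).integral_map]
  rw [map_mulVec_volume hB, integral_smul_measure, ENNReal.toReal_ofReal (abs_nonneg _), abs_inv]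

open scoped MatrixOrder in
theorem Matrix.PosDef.exists_eq_transpose_mul_self {A : Matrix ι ι ℝ} (hA : A.PosDef) :
    ∃ B : Matrix ι ι ℝ, A = Bᵀ * B := by
  obtain ⟨B, rfl⟩ := CStarAlgebra.nonneg_iff_eq_star_mul_self.mp hA.posSemidef.nonneg
  exact ⟨B, rfl⟩

theorem integrable_exp_neg_half_dotProduct_mulVec {A : Matrix ι ι ℝ} (hA : A.PosDef) :
    Integrable (fun X : ι → ℝ => Real.exp (-(1 / 2) * (X ⬝ᵥ A *ᵥ X))) := by
  obtain ⟨B, rfl⟩ := hA.exists_eq_transpose_mul_self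
  have hB : B.det ≠ 0 := by simpa [det_mul] using hA.det_pos.ne'
  simp_rw [dotProduct_transpose_mul_mulVec]
  exact (integrable_comp_mulVec_iff hB).mpr integrable_exp_neg_half_sum_sq

theorem integral_exp_neg_half_dotProduct_mulVec {A : Matrix ι ι ℝ} (hA : A.PosDef) :
    ∫ X : ι → ℝ, Real.exp (-(1 / 2) * (X ⬝ᵥ A *ᵥ X)) =
      √(2 * Real.pi) ^ Fintype.card ι / √A.det := by
  obtain ⟨B, rfl⟩ := hA.exists_eq_transpose_mul_self
  have hB : B.det ≠ 0 := by simpa [det_mul] using hA.det_pos.ne'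
  simp_rw [dotProduct_transpose_mul_mulVec]
  rw [integral_comp_mulVec hB fun Y => Real.exp (-(1 / 2) * ∑ i, Y i ^ 2),
    integral_exp_neg_half_sum_sq, det_mul, det_transpose, Real.sqrt_mul_self_eq_abs, smul_eq_mul,
    inv_mul_eq_div]

end RealGaussian

theorem Real.sqrt_pow {x : ℝ} (hx : 0 ≤ x) (n : ℕ) : √(x ^ n) = √x ^ n := by
  rw [← Real.sqrt_sq (pow_nonneg (Real.sqrt_nonneg x) n), ← pow_mul, mul_comm, pow_mul,
    Real.sq_sqrt hx]

theorem Real.rpow_neg_half {x : ℝ} (hx : 0 ≤ x) : x ^ (-(1 / 2) : ℝ) = (√x)⁻¹ := by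
  rw [Real.sqrt_eq_rpow, Real.rpow_neg hx]

theorem Real.rpow_neg_natCast_div_two {x : ℝ} (hx : 0 ≤ x) (n : ℕ) :
    x ^ (-(n : ℝ) / 2) = (√x ^ n)⁻¹ := by
  rw [Real.sqrt_eq_rpow, ← Real.rpow_natCast, ← Real.rpow_mul hx, ← Real.rpow_neg (by positivity)]
  ring_nf

theorem Complex.norm_cpow_neg_half (w : ℂ) : ‖w ^ (-(1 : ℂ) / 2)‖ = ‖w‖ ^ (-(1 / 2) : ℝ) := by
  rw [← Complex.norm_cpow_real]
  norm_num

section ComplexGaussian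

variable {ι : Type*} [Fintype ι]

theorem ofReal_dotProduct_map_ofReal_mulVec (A : Matrix ι ι ℝ) (X : ι → ℝ) :
    (fun i => (X i : ℂ)) ⬝ᵥ A.map (fun x : ℝ => (x : ℂ)) *ᵥ (fun i => (X i : ℂ)) =
      ((X ⬝ᵥ A *ᵥ X : ℝ) : ℂ) := by
  simp [dotProduct, mulVec]

variable [DecidableEq ι]

theorem inv_smul_map_ofReal {z : ℂ} (hz : z ≠ 0) {C : Matrix ι ι ℝ} (hC : C.det ≠ 0) :
    (z • C.map (fun x : ℝ => (x : ℂ)))⁻¹ = z⁻¹ • C⁻¹.map (fun x : ℝ => (x : ℂ)) := by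
  refine inv_eq_right_inv ?_
  rw [smul_mul_smul_comm, mul_inv_cancel₀ hz, one_smul]
  change C.map Complex.ofRealHom * C⁻¹.map Complex.ofRealHom = 1
  rw [← Matrix.map_mul, mul_nonsing_inv C (isUnit_iff_ne_zero.mpr hC),
    Matrix.map_one _ (map_zero _) (map_one _)]

noncomputable def complexGaussianDensity (z : ℂ) (C : Matrix ι ι ℝ) (X : ι → ℝ) : ℂ :=
  (((2 * Real.pi) ^ (-(Fintype.card ι : ℝ) / 2) : ℝ) : ℂ) *
    ((z • C.map (fun x : ℝ => (x : ℂ))).det ^ (-(1 : ℂ) / 2)) *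
    Complex.exp (-(1 / 2) *
      dotProduct (fun i => (X i : ℂ))
        ((z • C.map (fun x : ℝ => (x : ℂ)))⁻¹.mulVec fun i => (X i : ℂ)))

theorem norm_complexGaussianDensity {z : ℂ} (hz : z ≠ 0) {C : Matrix ι ι ℝ} (hC : C.det ≠ 0)
    (X : ι → ℝ) :
    ‖complexGaussianDensity z C X‖ =
      (2 * Real.pi) ^ (-(Fintype.card ι : ℝ) / 2) *
        (‖z‖ ^ Fintype.card ι * |C.det|) ^ (-(1 / 2) : ℝ) *
        Real.exp (-(1 / 2) * (X ⬝ᵥ (z⁻¹.re • C⁻¹) *ᵥ X)) := by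
  have hdet : (z • C.map (fun x : ℝ => (x : ℂ))).det = z ^ Fintype.card ι * (C.det : ℂ) := by
    rw [det_smul]
    exact congrArg _ (Complex.ofRealHom.map_det C).symm
  rw [complexGaussianDensity, norm_mul, norm_mul, Complex.norm_real,
    Real.norm_of_nonneg (by positivity), Complex.norm_cpow_neg_half, hdet, norm_mul, norm_pow,
    Complex.norm_real, Real.norm_eq_abs, Complex.norm_exp, inv_smul_map_ofReal hz hC,
    smul_mulVec, dotProduct_smul, ofReal_dotProduct_map_ofReal_mulVec, smul_mulVec,
    dotProduct_smul, smul_eq_mul, smul_eq_mul]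
  congr 2
  simp

theorem Complex.inv_re_pos {z : ℂ} (hz : 0 < z.re) : 0 < z⁻¹.re := by
  rw [Complex.inv_re]
  exact div_pos hz (Complex.normSq_pos.mpr (Complex.ne_zero_of_re_pos hz))

theorem integrable_norm_complexGaussianDensity {z : ℂ} (hz : 0 < z.re) {C : Matrix ι ι ℝ}
    (hC : C.PosDef) : Integrable fun X => ‖complexGaussianDensity z C X‖ := by
  simp_rw [norm_complexGaussianDensity (Complex.ne_zero_of_re_pos hz) hC.det_pos.ne']
  exact (integrable_exp_neg_half_dotProduct_mulVec
    (hC.inv.smul (Complex.inv_re_pos hz))).const_mul _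

theorem integral_norm_complexGaussianDensity {z : ℂ} (hz : 0 < z.re) {C : Matrix ι ι ℝ}
    (hC : C.PosDef) :
    ∫ X, ‖complexGaussianDensity z C X‖ = Real.cos z.arg ^ (-(Fintype.card ι : ℝ) / 2) := by
  have hz0 : z ≠ 0 := Complex.ne_zero_of_re_pos hz
  have hr : 0 < ‖z‖ := norm_pos_iff.mpr hz0
  have ht : 0 < z⁻¹.re := Complex.inv_re_pos hz
  have hd : 0 < C.det := hC.det_pos
  have hcos : Real.cos z.arg = ‖z‖ * z⁻¹.re := by
    rw [Complex.cos_arg hz0, Complex.inv_re, Complex.normSq_eq_norm_sq]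
    field_simp
  simp_rw [norm_complexGaussianDensity hz0 hd.ne']
  rw [integral_const_mul, integral_exp_neg_half_dotProduct_mulVec (hC.inv.smul ht), det_smul,
    det_nonsing_inv, Ring.inverse_eq_inv', abs_of_pos hd, hcos,
    Real.rpow_neg_natCast_div_two (by positivity), Real.rpow_neg_natCast_div_two (by positivity),
    Real.rpow_neg_half (by positivity), Real.sqrt_mul (pow_nonneg hr.le _),
    Real.sqrt_mul (pow_nonneg ht.le _), Real.sqrt_inv, Real.sqrt_mul hr.le, Real.sqrt_pow hr.le,
    Real.sqrt_pow ht.le, mul_pow]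
  field_simp

theorem norm_integral_complexGaussianDensity_mul_le {z : ℂ} (hz : 0 < z.re)
    {C : Matrix ι ι ℝ} (hC : C.PosDef) {F : (ι → ℝ) → ℂ}
    (hF : BddAbove (Set.range fun X => ‖F X‖)) :
    ‖∫ X, complexGaussianDensity z C X * F X‖ ≤
      Real.cos z.arg ^ (-(Fintype.card ι : ℝ) / 2) * ⨆ X, ‖F X‖ := by
  rw [← integral_norm_complexGaussianDensity hz hC, ← integral_mul_const]
  refine norm_integral_le_of_norm_le
    ((integrable_norm_complexGaussianDensity hz hC).mul_const _) (.of_forall fun X => ?_)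
  rw [norm_mul]
  exact mul_le_mul_of_nonneg_left (le_ciSup hF X) (norm_nonneg _)

end ComplexGaussian

theorem complex_gaussian_bound_general (n : ℕ) (z : ℂ) (hz : 0 < z.re)
    (C : Matrix (Fin n) (Fin n) ℝ) (hC : C.PosDef)
    (F : (Fin n → ℝ) → ℂ) (hFb : ∃ B, ∀ X, ‖F X‖ ≤ B) :
    ‖(∫ X : Fin n → ℝ,
        (((2 * Real.pi) ^ (-(n : ℝ) / 2) : ℝ) : ℂ) *
          ((z • C.map (fun x : ℝ => (x : ℂ))).det ^ (-(1 : ℂ) / 2)) *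
          Complex.exp (-(1 / 2) *
            dotProduct (fun i => (X i : ℂ))
              ((z • C.map (fun x : ℝ => (x : ℂ)))⁻¹.mulVec fun i => (X i : ℂ))) *
          F X)‖
      ≤ (Real.cos z.arg) ^ (-(n : ℝ) / 2) * ⨆ X, ‖F X‖ := by
  obtain ⟨B, hB⟩ := hFb
  simpa only [complexGaussianDensity, Fintype.card_fin] using
    norm_integral_complexGaussianDensity_mul_le hz hC ⟨B, Set.forall_mem_range.mpr hB⟩

theorem complex_gaussian_bound (n : ℕ) (hn : 1 ≤ n) (z : ℂ) (hz : 0 < z.re)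
    (C : Matrix (Fin n) (Fin n) ℝ) (hC : C.PosDef)
    (F : (Fin n → ℝ) → ℂ) (hFc : Continuous F) (hFb : ∃ B, ∀ X, ‖F X‖ ≤ B) :
    ‖(∫ X : Fin n → ℝ,
        (((2 * Real.pi) ^ (-(n : ℝ) / 2) : ℝ) : ℂ) *
          ((z • C.map (fun x : ℝ => (x : ℂ))).det ^ (-(1 : ℂ) / 2)) *
          Complex.exp (-(1 / 2) *
            dotProduct (fun i => (X i : ℂ))
              ((z • C.map (fun x : ℝ => (x : ℂ)))⁻¹.mulVec fun i => (X i : ℂ))) *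
          F X)‖
      ≤ (Real.cos z.arg) ^ (-(n : ℝ) / 2) * ⨆ X, ‖F X‖ :=
  complex_gaussian_bound_general n z hz C hC F hFb
end
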